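/- arXiv:2509.22543 — 2 statements merged into one kernel-verified Lean document; each statement's English description precedes it below -/
import Mathlib

section
/- Let S, L, A, M, Y be discrete random variables on a finite probability space, with P(S=0) > 0, and suppose the working limits e*, f*, g*, h*, T1*, T2* satisfy model M1: e*(l) = P(A=a | S=1, L=l), f*(m,l) = P(A=a | S=1, M=m, L=l), g*(s,l)(m) = P(M=m | S=s, L=l), h*(s,l) = P(S=s | L=l), all bounded below by some \epsilon > 0, while T1* and T2* are arbitrary bounded functions with T2*(l,a') = \sum_m T1*(l,m) P(M=m | L=l, A=a', S=1) for all l, a'. Then E[ H(\gamma, e*, f*, g*, h*, T2*, T1*) ] = \Psi^a, where \gamma = 1/P(S=0) and H is defined by H = \gamma [ (1-S) f*(M,L) g*(1,L)(M) / (e*(L) g*(0,L)(M)) (Y - T1*(L,M)) + S 1{A=a} h*(0,L)/(e*(L) h*(1,L)) (T1*(L,M) - T2*(L,A)) + (1-S) T2*(L,a) ], and \Psi^a = \sum_{m,l} E[Y | M=m, L=l, S=0] P(M=m | L=l, A=a, S=1) P(L=l | S=0). -/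
/-!
Under model M1 the nuisance functions factor the joint law of `(S, A, M, L)` by the chain rule.
With these factorizations the weight `f g₁ / (e g₀)` of the outcome residual turns the `S = 0`
law of `(M, L)` into `h₀ / (e h₁)` times its `S = 1, A = a` law, and `h₀ / (e h₁)` turns the
`S = 1, A = a` law of `L` into its `S = 0` law. So in expectation the `T1` terms of `H` cancel,
as do the `T2` terms, and the weighted mean of `Y` over `S = 0` that remains is `Ψ^a`, stratum by
stratum.
-/

open Finset
open scoped Classical

noncomputable section

/-- Probability of an event under weight function `w`. -/
def Pr {Ω : Type*} [Fintype Ω] (w : Ω → ℝ) (E : Ω → Prop) : ℝ :=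
  ∑ ω, if E ω then w ω else 0

/-- Conditional probability `P(E | F)`. -/
def CP {Ω : Type*} [Fintype Ω] (w : Ω → ℝ) (E F : Ω → Prop) : ℝ :=
  Pr w (fun ω => E ω ∧ F ω) / Pr w F

/-- Conditional expectation `E[X | F]`. -/
def CE {Ω : Type*} [Fintype Ω] (w : Ω → ℝ) (X : Ω → ℝ) (F : Ω → Prop) : ℝ :=
  (∑ ω, if F ω then w ω * X ω else 0) / Pr w F

/-- The estimating function `H` built from working nuisance functions. -/
def Hfun {Ω 𝕃 𝕄 𝔸 : Type*}
    (S : Ω → ℕ) (L : Ω → 𝕃) (A : Ω → 𝔸) (M : Ω → 𝕄) (Y : Ω → ℝ) (a : 𝔸)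
    (γ : ℝ) (e : 𝕃 → ℝ) (f : 𝕄 → 𝕃 → ℝ) (g : ℕ → 𝕃 → 𝕄 → ℝ) (h : ℕ → 𝕃 → ℝ)
    (T2 : 𝕃 → 𝔸 → ℝ) (T1 : 𝕃 → 𝕄 → ℝ) (ω : Ω) : ℝ :=
  γ * ((if S ω = 0 then (1:ℝ) else 0) * f (M ω) (L ω) * g 1 (L ω) (M ω) /
        (e (L ω) * g 0 (L ω) (M ω)) * (Y ω - T1 (L ω) (M ω)) +
      (if S ω = 1 ∧ A ω = a then (1:ℝ) else 0) * h 0 (L ω) /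
        (e (L ω) * h 1 (L ω)) * (T1 (L ω) (M ω) - T2 (L ω) (A ω)) +
      (if S ω = 0 then (1:ℝ) else 0) * T2 (L ω) a)

/-- The identified g-formula functional `Ψ^a`. -/
def PsiA {Ω 𝕃 𝕄 𝔸 : Type*} [Fintype Ω] [Fintype 𝕃] [Fintype 𝕄]
    (w : Ω → ℝ) (S : Ω → ℕ) (L : Ω → 𝕃) (A : Ω → 𝔸) (M : Ω → 𝕄)
    (Y : Ω → ℝ) (a : 𝔸) : ℝ :=
  ∑ m : 𝕄, ∑ l : 𝕃,
    CE w Y (fun ω => M ω = m ∧ L ω = l ∧ S ω = 0) *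
    CP w (fun ω => M ω = m) (fun ω => L ω = l ∧ A ω = a ∧ S ω = 1) *
    CP w (fun ω => L ω = l) (fun ω => S ω = 0)

section WeightedSums

variable {Ω : Type*} [Fintype Ω] (w : Ω → ℝ)

theorem Pr_congr {E F : Ω → Prop} (h : ∀ ω, E ω ↔ F ω) : Pr w E = Pr w F := by
  rw [show E = F from funext fun ω => propext (h ω)]

theorem Pr_ne_zero_of_CP_ne_zero {E F : Ω → Prop} (h : CP w E F ≠ 0) : Pr w F ≠ 0 :=
  fun hF => h (by rw [CP, hF, div_zero])

theorem Pr_and_eq_mul_of_CP_eq {E F : Ω → Prop} {c : ℝ} (hc : c = CP w E F) (hc0 : c ≠ 0) :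
    Pr w (fun ω => E ω ∧ F ω) = c * Pr w F := by
  subst hc
  rw [CP, div_mul_cancel₀ _ (Pr_ne_zero_of_CP_ne_zero w hc0)]

theorem sum_ite_mul_comp_mul_eq {κ : Type*} [Fintype κ] [DecidableEq κ] (K : Ω → κ)
    (E : Ω → Prop) [DecidablePred E] (φ : κ → ℝ) (X : Ω → ℝ) :
    ∑ ω, (if E ω then w ω * φ (K ω) * X ω else 0) =
      ∑ k, φ k * ∑ ω, if K ω = k ∧ E ω then w ω * X ω else 0 := by
  simp_rw [mul_sum]
  rw [sum_comm]
  refine sum_congr rfl fun ω _ => ?_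
  by_cases hE : E ω <;> simp [hE, mul_comm, mul_left_comm]

theorem sum_ite_mul_comp_eq {κ : Type*} [Fintype κ] (K : Ω → κ) (E : Ω → Prop)
    [DecidablePred E] (φ : κ → ℝ) :
    ∑ ω, (if E ω then w ω * φ (K ω) else 0) = ∑ k, φ k * Pr w (fun ω => K ω = k ∧ E ω) := by
  simp_rw [Pr, mul_sum]
  rw [sum_comm]
  refine sum_congr rfl fun ω _ => ?_
  by_cases hE : E ω <;> simp [hE, mul_comm]

theorem sum_ite_mul_comp_eq_of_strata {κ : Type*} [Fintype κ] (K : Ω → κ) {E F : Ω → Prop}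
    [DecidablePred E] [DecidablePred F] {u v : κ → ℝ}
    (huv : ∀ k, u k * Pr w (fun ω => K ω = k ∧ E ω) = v k * Pr w (fun ω => K ω = k ∧ F ω))
    (φ : κ → ℝ) :
    ∑ ω, (if E ω then w ω * (u (K ω) * φ (K ω)) else 0) =
      ∑ ω, if F ω then w ω * (v (K ω) * φ (K ω)) else 0 := by
  rw [sum_ite_mul_comp_eq w K E (fun k => u k * φ k),
    sum_ite_mul_comp_eq w K F (fun k => v k * φ k)]
  exact sum_congr rfl fun k _ => by rw [mul_right_comm, huv, mul_right_comm]

end WeightedSums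

structure ModelM1 {Ω 𝕃 𝕄 𝔸 : Type*} [Fintype Ω] (w : Ω → ℝ) (S : Ω → ℕ) (L : Ω → 𝕃)
    (A : Ω → 𝔸) (M : Ω → 𝕄) (a : 𝔸) (ε : ℝ) (e : 𝕃 → ℝ) (f : 𝕄 → 𝕃 → ℝ)
    (g : ℕ → 𝕃 → 𝕄 → ℝ) (h : ℕ → 𝕃 → ℝ) : Prop where
  ε_pos : ε > 0
  e_spec : ∀ l, e l = CP w (fun ω => A ω = a) (fun ω => S ω = 1 ∧ L ω = l) ∧ e l > ε
  f_spec : ∀ m l, f m l =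
    CP w (fun ω => A ω = a) (fun ω => S ω = 1 ∧ M ω = m ∧ L ω = l) ∧ f m l > ε
  g_spec : ∀ s m l, s = 0 ∨ s = 1 →
    g s l m = CP w (fun ω => M ω = m) (fun ω => S ω = s ∧ L ω = l) ∧ g s l m > ε
  h_spec : ∀ s l, s = 0 ∨ s = 1 →
    h s l = CP w (fun ω => S ω = s) (fun ω => L ω = l) ∧ h s l > ε

def outcomeWeight {𝕃 𝕄 : Type*} (e : 𝕃 → ℝ) (f : 𝕄 → 𝕃 → ℝ) (g : ℕ → 𝕃 → 𝕄 → ℝ)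
    (m : 𝕄) (l : 𝕃) : ℝ :=
  f m l * g 1 l m / (e l * g 0 l m)

def pseudoOutcomeWeight {𝕃 : Type*} (e : 𝕃 → ℝ) (h : ℕ → 𝕃 → ℝ) (l : 𝕃) : ℝ :=
  h 0 l / (e l * h 1 l)

theorem mul_Hfun_eq {Ω 𝕃 𝕄 𝔸 : Type*} (w : Ω → ℝ) (S : Ω → ℕ) (L : Ω → 𝕃) (A : Ω → 𝔸)
    (M : Ω → 𝕄) (Y : Ω → ℝ) (a : 𝔸) (γ : ℝ) (e : 𝕃 → ℝ) (f : 𝕄 → 𝕃 → ℝ)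
    (g : ℕ → 𝕃 → 𝕄 → ℝ) (h : ℕ → 𝕃 → ℝ) (T2 : 𝕃 → 𝔸 → ℝ) (T1 : 𝕃 → 𝕄 → ℝ) (ω : Ω) :
    w ω * Hfun S L A M Y a γ e f g h T2 T1 ω = γ *
      ((if S ω = 0 then w ω * outcomeWeight e f g (M ω) (L ω) * Y ω else 0) -
        (if S ω = 0 then w ω * (outcomeWeight e f g (M ω) (L ω) * T1 (L ω) (M ω)) else 0) +
        (if A ω = a ∧ S ω = 1 then w ω * (pseudoOutcomeWeight e h (L ω) * T1 (L ω) (M ω))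
          else 0) -
        (if A ω = a ∧ S ω = 1 then w ω * (pseudoOutcomeWeight e h (L ω) * T2 (L ω) a) else 0) +
        (if S ω = 0 then w ω * T2 (L ω) a else 0)) := by
  rw [Hfun, outcomeWeight, pseudoOutcomeWeight]
  split_ifs <;> simp_all <;> ring

namespace ModelM1

variable {Ω 𝕃 𝕄 𝔸 : Type*} [Fintype Ω] {w : Ω → ℝ} {S : Ω → ℕ} {L : Ω → 𝕃} {A : Ω → 𝔸}
  {M : Ω → 𝕄} {a : 𝔸} {ε : ℝ} {e : 𝕃 → ℝ} {f : 𝕄 → 𝕃 → ℝ} {g : ℕ → 𝕃 → 𝕄 → ℝ}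
  {h : ℕ → 𝕃 → ℝ}

theorem e_ne_zero (hM : ModelM1 w S L A M a ε e f g h) (l : 𝕃) : e l ≠ 0 :=
  (hM.ε_pos.trans (hM.e_spec l).2).ne'

theorem f_ne_zero (hM : ModelM1 w S L A M a ε e f g h) (m : 𝕄) (l : 𝕃) : f m l ≠ 0 :=
  (hM.ε_pos.trans (hM.f_spec m l).2).ne'

theorem g_ne_zero (hM : ModelM1 w S L A M a ε e f g h) {s : ℕ} (hs : s = 0 ∨ s = 1) (m : 𝕄)
    (l : 𝕃) : g s l m ≠ 0 :=
  (hM.ε_pos.trans (hM.g_spec s m l hs).2).ne'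

theorem h_ne_zero (hM : ModelM1 w S L A M a ε e f g h) {s : ℕ} (hs : s = 0 ∨ s = 1) (l : 𝕃) :
    h s l ≠ 0 :=
  (hM.ε_pos.trans (hM.h_spec s l hs).2).ne'

theorem Pr_L_ne_zero (hM : ModelM1 w S L A M a ε e f g h) (l : 𝕃) :
    Pr w (fun ω => L ω = l) ≠ 0 :=
  Pr_ne_zero_of_CP_ne_zero w ((hM.h_spec 0 l (.inl rfl)).1 ▸ hM.h_ne_zero (.inl rfl) l)

theorem Pr_L_S (hM : ModelM1 w S L A M a ε e f g h) {s : ℕ} (hs : s = 0 ∨ s = 1) (l : 𝕃) :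
    Pr w (fun ω => L ω = l ∧ S ω = s) = h s l * Pr w (fun ω => L ω = l) := by
  rw [Pr_congr w fun _ => and_comm]
  exact Pr_and_eq_mul_of_CP_eq w (hM.h_spec s l hs).1 (hM.h_ne_zero hs l)

theorem Pr_M_L_S (hM : ModelM1 w S L A M a ε e f g h) {s : ℕ} (hs : s = 0 ∨ s = 1) (m : 𝕄)
    (l : 𝕃) :
    Pr w (fun ω => M ω = m ∧ L ω = l ∧ S ω = s) =
      g s l m * (h s l * Pr w (fun ω => L ω = l)) := by
  rw [← hM.Pr_L_S hs, Pr_congr w fun _ => and_congr_right' and_comm,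
    Pr_and_eq_mul_of_CP_eq w (hM.g_spec s m l hs).1 (hM.g_ne_zero hs m l),
    Pr_congr w fun _ => and_comm]

theorem Pr_L_A_S (hM : ModelM1 w S L A M a ε e f g h) (l : 𝕃) :
    Pr w (fun ω => L ω = l ∧ A ω = a ∧ S ω = 1) =
      e l * (h 1 l * Pr w (fun ω => L ω = l)) := by
  rw [← hM.Pr_L_S (.inr rfl), Pr_congr w (F := fun ω => A ω = a ∧ S ω = 1 ∧ L ω = l)
      fun _ => by tauto,
    Pr_and_eq_mul_of_CP_eq w (hM.e_spec l).1 (hM.e_ne_zero l), Pr_congr w fun _ => and_comm]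

theorem Pr_M_L_A_S (hM : ModelM1 w S L A M a ε e f g h) (m : 𝕄) (l : 𝕃) :
    Pr w (fun ω => M ω = m ∧ L ω = l ∧ A ω = a ∧ S ω = 1) =
      f m l * (g 1 l m * (h 1 l * Pr w (fun ω => L ω = l))) := by
  rw [← hM.Pr_M_L_S (.inr rfl),
    Pr_congr w (F := fun ω => A ω = a ∧ S ω = 1 ∧ M ω = m ∧ L ω = l) fun _ => by tauto,
    Pr_and_eq_mul_of_CP_eq w (hM.f_spec m l).1 (hM.f_ne_zero m l),
    Pr_congr w (F := fun ω => M ω = m ∧ L ω = l ∧ S ω = 1) fun _ => by tauto]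


theorem outcomeWeight_mul_Pr (hM : ModelM1 w S L A M a ε e f g h) (m : 𝕄) (l : 𝕃) :
    outcomeWeight e f g m l * Pr w (fun ω => M ω = m ∧ L ω = l ∧ S ω = 0) =
      pseudoOutcomeWeight e h l * Pr w (fun ω => M ω = m ∧ L ω = l ∧ A ω = a ∧ S ω = 1) := by
  have := hM.g_ne_zero (.inl rfl) m l
  have := hM.h_ne_zero (.inr rfl) l
  rw [hM.Pr_M_L_S (.inl rfl), hM.Pr_M_L_A_S, outcomeWeight, pseudoOutcomeWeight]
  field_simp

theorem pseudoOutcomeWeight_mul_Pr (hM : ModelM1 w S L A M a ε e f g h) (l : 𝕃) :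
    pseudoOutcomeWeight e h l * Pr w (fun ω => L ω = l ∧ A ω = a ∧ S ω = 1) =
      Pr w (fun ω => L ω = l ∧ S ω = 0) := by
  have := hM.e_ne_zero l
  have := hM.h_ne_zero (.inr rfl) l
  rw [hM.Pr_L_A_S, hM.Pr_L_S (.inl rfl), pseudoOutcomeWeight]
  field_simp

theorem outcomeWeight_mul_eq_CE_mul_CP_mul_CP (hM : ModelM1 w S L A M a ε e f g h) (Y : Ω → ℝ)
    (m : 𝕄) (l : 𝕃) :
    1 / Pr w (fun ω => S ω = 0) * (outcomeWeight e f g m l *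
        ∑ ω, if M ω = m ∧ L ω = l ∧ S ω = 0 then w ω * Y ω else 0) =
      CE w Y (fun ω => M ω = m ∧ L ω = l ∧ S ω = 0) *
        CP w (fun ω => M ω = m) (fun ω => L ω = l ∧ A ω = a ∧ S ω = 1) *
        CP w (fun ω => L ω = l) (fun ω => S ω = 0) := by
  have := hM.e_ne_zero l
  have := hM.g_ne_zero (.inl rfl) m l
  have := hM.h_ne_zero (.inl rfl) l
  have := hM.h_ne_zero (.inr rfl) l
  have := hM.Pr_L_ne_zero l
  rw [CE, CP, CP, hM.Pr_M_L_S (.inl rfl), hM.Pr_M_L_A_S, hM.Pr_L_A_S, hM.Pr_L_S (.inl rfl),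
    outcomeWeight]
  field_simp

theorem sum_outcomeWeight_mul [Fintype 𝕃] [Fintype 𝕄] (hM : ModelM1 w S L A M a ε e f g h)
    (φ : 𝕃 → 𝕄 → ℝ) :
    (∑ ω, if S ω = 0 then w ω * (outcomeWeight e f g (M ω) (L ω) * φ (L ω) (M ω)) else 0) =
      ∑ ω, if A ω = a ∧ S ω = 1 then
        w ω * (pseudoOutcomeWeight e h (L ω) * φ (L ω) (M ω)) else 0 :=
  sum_ite_mul_comp_eq_of_strata w (fun ω => (M ω, L ω))
    (u := fun k => outcomeWeight e f g k.1 k.2) (v := fun k => pseudoOutcomeWeight e h k.2)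
    (fun ⟨m, l⟩ => by simpa only [Prod.mk.injEq, and_assoc] using hM.outcomeWeight_mul_Pr m l)
    (fun k => φ k.2 k.1)

theorem sum_pseudoOutcomeWeight_mul [Fintype 𝕃] (hM : ModelM1 w S L A M a ε e f g h) (ψ : 𝕃 → ℝ) :
    (∑ ω, if A ω = a ∧ S ω = 1 then w ω * (pseudoOutcomeWeight e h (L ω) * ψ (L ω)) else 0) =
      ∑ ω, if S ω = 0 then w ω * ψ (L ω) else 0 := by
  simpa only [one_mul] using sum_ite_mul_comp_eq_of_strata w L (u := pseudoOutcomeWeight e h)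
    (v := fun _ => 1) (fun l => (hM.pseudoOutcomeWeight_mul_Pr l).trans (one_mul _).symm) ψ

theorem one_div_Pr_mul_sum_outcomeWeight_mul_eq_PsiA [Fintype 𝕃] [Fintype 𝕄]
    (hM : ModelM1 w S L A M a ε e f g h) (Y : Ω → ℝ) :
    1 / Pr w (fun ω => S ω = 0) *
        (∑ ω, if S ω = 0 then w ω * outcomeWeight e f g (M ω) (L ω) * Y ω else 0) =
      PsiA w S L A M Y a := by
  rw [sum_ite_mul_comp_mul_eq w (fun ω => (M ω, L ω)) (fun ω => S ω = 0)
      (fun k => outcomeWeight e f g k.1 k.2) Y, Fintype.sum_prod_type, mul_sum]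
  refine sum_congr rfl fun m _ => ?_
  rw [mul_sum]
  refine sum_congr rfl fun l _ => ?_
  simpa only [Prod.mk.injEq, and_assoc] using hM.outcomeWeight_mul_eq_CE_mul_CP_mul_CP Y m l

end ModelM1

theorem triple_robust_M1_general
    {Ω 𝕃 𝕄 𝔸 : Type*} [Fintype Ω] [Fintype 𝕃] [Fintype 𝕄]
    (w : Ω → ℝ)
    (S : Ω → ℕ) (L : Ω → 𝕃) (A : Ω → 𝔸) (M : Ω → 𝕄) (Y : Ω → ℝ) (a : 𝔸)
    (e : 𝕃 → ℝ) (f : 𝕄 → 𝕃 → ℝ) (g : ℕ → 𝕃 → 𝕄 → ℝ) (h : ℕ → 𝕃 → ℝ)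
    (T1 : 𝕃 → 𝕄 → ℝ) (T2 : 𝕃 → 𝔸 → ℝ) (ε : ℝ) (hε : ε > 0)
    -- model M1: all propensity-type nuisances correct and bounded below
    (he : ∀ l, e l = CP w (fun ω => A ω = a) (fun ω => S ω = 1 ∧ L ω = l) ∧ e l > ε)
    (hf : ∀ m l, f m l =
      CP w (fun ω => A ω = a) (fun ω => S ω = 1 ∧ M ω = m ∧ L ω = l) ∧ f m l > ε)
    (hg : ∀ s m l, s = 0 ∨ s = 1 →
      g s l m = CP w (fun ω => M ω = m) (fun ω => S ω = s ∧ L ω = l) ∧ g s l m > ε)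
    (hh : ∀ s l, s = 0 ∨ s = 1 →
      h s l = CP w (fun ω => S ω = s) (fun ω => L ω = l) ∧ h s l > ε) :
    (∑ ω, w ω *
        Hfun S L A M Y a (1 / Pr w (fun ω => S ω = 0)) e f g h T2 T1 ω) =
      PsiA w S L A M Y a := by
  have hM : ModelM1 w S L A M a ε e f g h := ⟨hε, he, hf, hg, hh⟩
  rw [← hM.one_div_Pr_mul_sum_outcomeWeight_mul_eq_PsiA Y]
  simp only [mul_Hfun_eq, ← mul_sum, sum_add_distrib, sum_sub_distrib,
    hM.sum_outcomeWeight_mul T1, hM.sum_pseudoOutcomeWeight_mul fun l => T2 l a]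
  ring

/-- first arm of triple robustness (model M1): when all
propensity-type nuisance functions are correct, `H` is unbiased for `Ψ^a`. -/
theorem triple_robust_M1
    {Ω 𝕃 𝕄 𝔸 : Type*} [Fintype Ω] [Fintype 𝕃] [Fintype 𝕄] [Fintype 𝔸]
    (w : Ω → ℝ) (hw0 : ∀ ω, 0 ≤ w ω) (hw1 : ∑ ω, w ω = 1)
    (S : Ω → ℕ) (L : Ω → 𝕃) (A : Ω → 𝔸) (M : Ω → 𝕄) (Y : Ω → ℝ) (a : 𝔸)
    (hposS0 : Pr w (fun ω => S ω = 0) > 0)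
    (hpos : ∀ m l a' s, s = 0 ∨ s = 1 →
      Pr w (fun ω => S ω = s ∧ M ω = m ∧ L ω = l) > 0 ∧
      Pr w (fun ω => S ω = s ∧ A ω = a' ∧ L ω = l) > 0 ∧
      Pr w (fun ω => L ω = l) > 0)
    (e : 𝕃 → ℝ) (f : 𝕄 → 𝕃 → ℝ) (g : ℕ → 𝕃 → 𝕄 → ℝ) (h : ℕ → 𝕃 → ℝ)
    (T1 : 𝕃 → 𝕄 → ℝ) (T2 : 𝕃 → 𝔸 → ℝ) (ε : ℝ) (hε : ε > 0)
    -- model M1: all propensity-type nuisances correct and bounded below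
    (he : ∀ l, e l = CP w (fun ω => A ω = a) (fun ω => S ω = 1 ∧ L ω = l) ∧ e l > ε)
    (hf : ∀ m l, f m l =
      CP w (fun ω => A ω = a) (fun ω => S ω = 1 ∧ M ω = m ∧ L ω = l) ∧ f m l > ε)
    (hg : ∀ s m l, s = 0 ∨ s = 1 →
      g s l m = CP w (fun ω => M ω = m) (fun ω => S ω = s ∧ L ω = l) ∧ g s l m > ε)
    (hh : ∀ s l, s = 0 ∨ s = 1 →
      h s l = CP w (fun ω => S ω = s) (fun ω => L ω = l) ∧ h s l > ε)
    -- T1 arbitrary but bounded; T2 internally consistent with T1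
    (hT1bdd : ∃ C : ℝ, ∀ l m, |T1 l m| ≤ C)
    (hT2 : ∀ l a', T2 l a' = ∑ m : 𝕄,
      T1 l m * CP w (fun ω => M ω = m) (fun ω => L ω = l ∧ A ω = a' ∧ S ω = 1)) :
    (∑ ω, w ω *
        Hfun S L A M Y a (1 / Pr w (fun ω => S ω = 0)) e f g h T2 T1 ω) =
      PsiA w S L A M Y a :=
  triple_robust_M1_general w S L A M Y a e f g h T1 T2 ε hε he hf hg hh
end
end

section
/- Let the efficiency bound for the data-integration estimand be B_q = (1/P(S=0)) E[ (p(M|S=1,A=a,L)^2/p(M|S=0,L)^2) Var(Y|L,M,S=0) + Var(T2(L,a)|S=0) | S=0 ] + (1/P(S=0)) E[ P(S=0|L)^2/(P(S=1|L)^2 P(A=a|S=1,L)) Var(T1(L,M)|L,A=a,S=1) | S=1 ], and let B_g be the efficiency bound for the stochastic exposure intervention with known exposure law p^g(m|l) = P(M=m|S=1,A=a,L=l), which equals the same expression as B_q without the last term. Then B_q - B_g = (1/P(S=0)) E[ P(S=0|L)^2/(P(S=1|L)^2 P(A=a|S=1,L)) Var(T1(L,M)|L,A=a,S=1) | S=1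 ] \geq 0, with equality if and only if T1(L,M) is almost surely constant in M given (L, A=a, S=1). -/
open Finset
open scoped Classical

noncomputable section

lemma Pr_nonneg {Ω : Type*} [Fintype Ω] (w : Ω → ℝ) (hw0 : ∀ ω, 0 ≤ w ω) (E : Ω → Prop) :
    0 ≤ Pr w E := by
  unfold Pr
  apply Finset.sum_nonneg
  intro ω _
  split_ifs
  exacts [hw0 ω, le_rfl]

lemma Pr_mono {Ω : Type*} [Fintype Ω] (w : Ω → ℝ) (hw0 : ∀ ω, 0 ≤ w ω) {E F : Ω → Prop}
    (h : ∀ ω, E ω → F ω) : Pr w E ≤ Pr w F := by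
  unfold Pr
  apply Finset.sum_le_sum
  intro ω _
  split_ifs with h1 h2
  exacts [le_rfl, absurd (h ω h1) h2, hw0 ω, le_rfl]

lemma CE_nonneg {Ω : Type*} [Fintype Ω] (w : Ω → ℝ) (hw0 : ∀ ω, 0 ≤ w ω) {X : Ω → ℝ}
    (hX : ∀ ω, 0 ≤ X ω) (F : Ω → Prop) : 0 ≤ CE w X F := by
  unfold CE
  apply div_nonneg _ (Pr_nonneg w hw0 F)
  apply Finset.sum_nonneg
  intro ω _
  split_ifs
  exacts [mul_nonneg (hw0 ω) (hX ω), le_rfl]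

lemma CE_eq_zero_iff {Ω : Type*} [Fintype Ω] (w : Ω → ℝ) (hw0 : ∀ ω, 0 ≤ w ω) {X : Ω → ℝ}
    (hX : ∀ ω, 0 ≤ X ω) {F : Ω → Prop} (hF : 0 < Pr w F) :
    CE w X F = 0 ↔ ∀ ω, F ω → w ω ≠ 0 → X ω = 0 := by
  unfold CE
  rw [div_eq_zero_iff]
  constructor
  · rintro (h | h)
    · have hterm : ∀ ω ∈ Finset.univ, (if F ω then w ω * X ω else 0) = 0 :=
        (Finset.sum_eq_zero_iff_of_nonneg (fun ω _ => by
          split_ifs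
          exacts [mul_nonneg (hw0 ω) (hX ω), le_rfl])).mp h
      intro ω hFω hwω
      have h2 := hterm ω (Finset.mem_univ ω)
      rw [if_pos hFω] at h2
      rcases mul_eq_zero.mp h2 with h' | h'
      exacts [absurd h' hwω, h']
    · exact absurd h hF.ne'
  · intro h
    left
    apply Finset.sum_eq_zero
    intro ω _
    split_ifs with hFω
    · by_cases hwω : w ω = 0
      · rw [hwω, zero_mul]
      · rw [h ω hFω hwω, mul_zero]
    · rfl

/-- the efficiency bound of the data-integration estimand exceeds
that of the known-exposure-law stochastic intervention by a nonnegative term,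
vanishing iff the outcome regression is a.s. constant in `M` given
`(L, A=a, S=1)`. -/
theorem efficiency_bound_comparison
    {Ω 𝕃 𝕄 𝔸 : Type*} [Fintype Ω] [Fintype 𝕃] [Fintype 𝕄] [Fintype 𝔸]
    (w : Ω → ℝ) (hw0 : ∀ ω, 0 ≤ w ω) (hw1 : ∑ ω, w ω = 1)
    (S : Ω → ℕ) (L : Ω → 𝕃) (A : Ω → 𝔸) (M : Ω → 𝕄) (Y : Ω → ℝ) (a : 𝔸)
    (hposS0 : Pr w (fun ω => S ω = 0) > 0)
    (hpos : ∀ m l a' s, s = 0 ∨ s = 1 →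
      Pr w (fun ω => S ω = s ∧ M ω = m ∧ L ω = l) > 0 ∧
      Pr w (fun ω => S ω = s ∧ A ω = a' ∧ L ω = l) > 0 ∧
      Pr w (fun ω => L ω = l) > 0)
    (T1 : 𝕃 → 𝕄 → ℝ) (T2 : 𝕃 → 𝔸 → ℝ) (Ψ : ℝ) (Bq Bg Δ : ℝ)
    (hT1 : ∀ l m, T1 l m = CE w Y (fun ω => L ω = l ∧ M ω = m ∧ S ω = 0))
    (hT2 : ∀ l a', T2 l a' = ∑ m : 𝕄,
      T1 l m * CP w (fun ω => M ω = m) (fun ω => L ω = l ∧ A ω = a' ∧ S ω = 1))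
    (hΨ : Ψ = CE w (fun ω => T2 (L ω) a) (fun ω => S ω = 0))
    -- the data-integration efficiency bound B_q
    (hBq : Bq =
      (1 / Pr w (fun ω => S ω = 0)) *
        CE w (fun ω =>
          (CP w (fun ω' => M ω' = M ω) (fun ω' => S ω' = 1 ∧ A ω' = a ∧ L ω' = L ω)) ^ 2 /
          (CP w (fun ω' => M ω' = M ω) (fun ω' => S ω' = 0 ∧ L ω' = L ω)) ^ 2 *
          CE w (fun ω' => (Y ω' - T1 (L ω) (M ω)) ^ 2)
            (fun ω' => L ω' = L ω ∧ M ω' = M ω ∧ S ω' = 0) +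
          (T2 (L ω) a - Ψ) ^ 2) (fun ω => S ω = 0) + Δ)
    -- B_g: the same expression without the last term
    (hBg : Bg =
      (1 / Pr w (fun ω => S ω = 0)) *
        CE w (fun ω =>
          (CP w (fun ω' => M ω' = M ω) (fun ω' => S ω' = 1 ∧ A ω' = a ∧ L ω' = L ω)) ^ 2 /
          (CP w (fun ω' => M ω' = M ω) (fun ω' => S ω' = 0 ∧ L ω' = L ω)) ^ 2 *
          CE w (fun ω' => (Y ω' - T1 (L ω) (M ω)) ^ 2)
            (fun ω' => L ω' = L ω ∧ M ω' = M ω ∧ S ω' = 0) +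
          (T2 (L ω) a - Ψ) ^ 2) (fun ω => S ω = 0))
    -- the added term
    (hΔ : Δ =
      (1 / Pr w (fun ω => S ω = 0)) *
        CE w (fun ω =>
          (CP w (fun ω' => S ω' = 0) (fun ω' => L ω' = L ω)) ^ 2 /
          ((CP w (fun ω' => S ω' = 1) (fun ω' => L ω' = L ω)) ^ 2 *
           CP w (fun ω' => A ω' = a) (fun ω' => S ω' = 1 ∧ L ω' = L ω)) *
          CE w (fun ω' => (T1 (L ω') (M ω') - T2 (L ω) a) ^ 2)
            (fun ω' => L ω' = L ω ∧ A ω' = a ∧ S ω' = 1)) (fun ω => S ω = 1)) :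
    Bq - Bg = Δ ∧ 0 ≤ Δ ∧
      (Δ = 0 ↔ ∀ ω, w ω ≠ 0 → S ω = 1 → A ω = a →
        T1 (L ω) (M ω) = T2 (L ω) a) := by

  -- Ω is nonempty
  rcases isEmpty_or_nonempty Ω with hE | hN
  · rw [Finset.univ_eq_empty, Finset.sum_empty] at hw1
    exact absurd hw1.symm one_ne_zero
  obtain ⟨ω0⟩ := hN
  -- positivity of P(S=1)
  have hP1 : 0 < Pr w (fun ω => S ω = 1) := by
    refine lt_of_lt_of_le (hpos (M ω0) (L ω0) a 1 (Or.inr rfl)).2.1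
      (Pr_mono w hw0 ?_)
    rintro ω ⟨h1, _, _⟩
    exact h1
  -- the coefficient c is positive
  have hc : ∀ ω : Ω, 0 <
      (CP w (fun ω' => S ω' = 0) (fun ω' => L ω' = L ω)) ^ 2 /
      ((CP w (fun ω' => S ω' = 1) (fun ω' => L ω' = L ω)) ^ 2 *
       CP w (fun ω' => A ω' = a) (fun ω' => S ω' = 1 ∧ L ω' = L ω)) := by
    intro ω
    have hL : 0 < Pr w (fun ω' => L ω' = L ω) :=
      (hpos (M ω0) (L ω) a 0 (Or.inl rfl)).2.2
    have h0 : 0 < Pr w (fun ω' => S ω' = 0 ∧ L ω' = L ω) := by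
      refine lt_of_lt_of_le (hpos (M ω0) (L ω) a 0 (Or.inl rfl)).2.1
        (Pr_mono w hw0 ?_)
      rintro ω' ⟨h1, _, h3⟩
      exact ⟨h1, h3⟩
    have h1 : 0 < Pr w (fun ω' => S ω' = 1 ∧ L ω' = L ω) := by
      refine lt_of_lt_of_le (hpos (M ω0) (L ω) a 1 (Or.inr rfl)).2.1
        (Pr_mono w hw0 ?_)
      rintro ω' ⟨h1, _, h3⟩
      exact ⟨h1, h3⟩
    have hA : 0 < Pr w (fun ω' => A ω' = a ∧ (S ω' = 1 ∧ L ω' = L ω)) := by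
      refine lt_of_lt_of_le (hpos (M ω0) (L ω) a 1 (Or.inr rfl)).2.1
        (Pr_mono w hw0 ?_)
      rintro ω' ⟨h1, h2, h3⟩
      exact ⟨h2, h1, h3⟩
    have c0 : 0 < CP w (fun ω' => S ω' = 0) (fun ω' => L ω' = L ω) := div_pos h0 hL
    have c1 : 0 < CP w (fun ω' => S ω' = 1) (fun ω' => L ω' = L ω) := div_pos h1 hL
    have cA : 0 < CP w (fun ω' => A ω' = a) (fun ω' => S ω' = 1 ∧ L ω' = L ω) :=
      div_pos hA h1
    exact div_pos (pow_pos c0 2) (mul_pos (pow_pos c1 2) cA)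
  -- the inner event has positive probability
  have hEv : ∀ ω : Ω, 0 < Pr w (fun ω' => L ω' = L ω ∧ A ω' = a ∧ S ω' = 1) := by
    intro ω
    refine lt_of_lt_of_le (hpos (M ω0) (L ω) a 1 (Or.inr rfl)).2.1
      (Pr_mono w hw0 ?_)
    rintro ω' ⟨h1, h2, h3⟩
    exact ⟨h3, h2, h1⟩
  -- nonnegativity of the integrand
  have hfnn : ∀ ω : Ω, 0 ≤
      (CP w (fun ω' => S ω' = 0) (fun ω' => L ω' = L ω)) ^ 2 /
      ((CP w (fun ω' => S ω' = 1) (fun ω' => L ω' = L ω)) ^ 2 *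
       CP w (fun ω' => A ω' = a) (fun ω' => S ω' = 1 ∧ L ω' = L ω)) *
      CE w (fun ω' => (T1 (L ω') (M ω') - T2 (L ω) a) ^ 2)
        (fun ω' => L ω' = L ω ∧ A ω' = a ∧ S ω' = 1) := fun ω =>
    mul_nonneg (hc ω).le (CE_nonneg w hw0 (fun ω' => sq_nonneg _) _)
  refine ⟨by rw [hBq, hBg]; ring, ?_, ?_⟩
  · rw [hΔ]
    exact mul_nonneg (by positivity) (CE_nonneg w hw0 hfnn _)
  · rw [hΔ, mul_eq_zero]
    have h10 : (1 : ℝ) / Pr w (fun ω => S ω = 0) ≠ 0 := one_div_ne_zero hposS0.ne'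
    rw [or_iff_right h10, CE_eq_zero_iff w hw0 hfnn hP1]
    constructor
    · intro h ω hw hS hA
      have hf := h ω hS hw
      have hinner0 : CE w (fun ω' => (T1 (L ω') (M ω') - T2 (L ω) a) ^ 2)
          (fun ω' => L ω' = L ω ∧ A ω' = a ∧ S ω' = 1) = 0 := by
        rcases mul_eq_zero.mp hf with h' | h'
        · exact absurd h' (hc ω).ne'
        · exact h'
      have hsq := (CE_eq_zero_iff w hw0 (fun ω' => sq_nonneg _) (hEv ω)).mp hinner0
        ω ⟨rfl, hA, hS⟩ hw
      have := sq_eq_zero_iff.mp hsq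
      linarith [this]
    · intro h ω hS hw
      have hinner0 : CE w (fun ω' => (T1 (L ω') (M ω') - T2 (L ω) a) ^ 2)
          (fun ω' => L ω' = L ω ∧ A ω' = a ∧ S ω' = 1) = 0 := by
        rw [CE_eq_zero_iff w hw0 (fun ω' => sq_nonneg _) (hEv ω)]
        rintro ω' ⟨hL, hA', hS'⟩ hw'
        rw [h ω' hw' hS' hA', hL, sub_self]
        exact zero_pow (by norm_num)
      rw [hinner0, mul_zero]
end
end
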